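/- Let p be a prime and k ≥ 1 an integer. Let F ⊂ ℂ_p be a subfield with [F:ℚ] = 2 admitting a field embedding ι : F → ℝ (a real quadratic field), with nontrivial ℚ-automorphism x ↦ x′, and let τ ∈ F ∖ ℚ with τ ∉ ℚ_p. Let Σ be the set of all ω = γ·τ (Möbius action of γ ∈ SL₂(ℤ[1/p]) on ℂ_p) such that ι(ω)·ι(ω′) < 0. For ω ∈ Σ let Q_ω = [a_ω, b_ω, c_ω] be the unique integral binary quadratic form with gcd(a_ω,b_ω,c_ω) = 1, Q_ω(ω,1) = 0, and ι(ω) = (−b_ω + √D_ω)/(2a_ω), where D_ω = b_ω² − 4a_ω c_ω > 0 and √D_ω is the positive real square root; let sgn(ω) ∈ {±1} be the sign of ι(ω), and fix any c_ω ∈ ℂ_p with c_ω² = D_ω. Then for every integer h ≥ 0 and every ε > 0, for all but finitely many ω ∈ Σ one has: Q_ω(z,1) ≠ 0 for all z ∈ H_p^{≤h}, and sup_{z ∈ H_p^{≤h}} |c_ω^k · Q_ω(z,1)^{−k}| < ε. In particular the series Σ_{ω∈Σ} sgn(ω)·c_ω^k·Q_ω(z,1)^{−k} converges uniformly on H_p^{≤h}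 after removing the finitely many terms with a zero of Q_ω(z,1) in H_p^{≤h}. -/

import Mathlib

/-!
Let `Q_τ` be the primitive integral form vanishing at `τ` and `D_ω` the discriminant of `Q_ω`.
Pulling `Q_ω` back along `γ ∈ SL₂(ℤ[1/p])` gives a `ℤ[1/p]`-form vanishing at `τ` with the same
discriminant, hence a `ℤ[1/p]`-multiple of `Q_τ`; comparing in both directions, the multiplier is
a unit of `ℤ[1/p]`, so `D_ω = D_τ p^j` and `D_ω · |D_ω|_p` does not depend on `ω`. The roots
`ω, ω′` have opposite signs, so `a_ω c_ω < 0` and the coefficients of `Q_ω` are bounded by `D_ω`.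
Hence only finitely many `ω` have `|√D_ω|² = |D_ω|_p` above any given bound.

When `|√D_ω|` is small, no root of `Q_ω` lies in `H_p^{≤h}`: a root there forces
`|√D_ω| ≥ |2| p^{-3h}`. Both roots then keep distance `≥ p^{-2h} max(1, |root|)` from
`H_p^{≤h}`, and the Gauss bound `|a_ω| max(1, |ω|) max(1, |ω′|) ≥ 1` for a primitive form gives
`|Q_ω(z,1)| ≥ p^{-4h}` there, so `|√D_ω^k Q_ω(z,1)^{-k}| ≤ (p^{4h} |√D_ω|)^k`. In a complete
ultrametric field, a family tending to `0` uniformly along the cofinite filter is uniformly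
summable, which gives the convergence of the series.
-/

open Filter

/-- The affinoid subdomain `H_p^{≤n}` of the `p`-adic upper half-plane:
the set of `z ∈ ℂ_p` with `‖z‖ ≤ p^n` and `‖z − t‖ ≥ p^(−n)` for every `t ∈ ℚ_p`. -/
def affinoid (p : ℕ) [Fact p.Prime] (K : Type*) [NormedField K] [Algebra ℚ_[p] K]
    (n : ℕ) : Set K :=
  {z | ‖z‖ ≤ (p : ℝ) ^ n ∧ ∀ t : ℚ_[p], ((p : ℝ) ^ n)⁻¹ ≤ ‖z - algebraMap ℚ_[p] K t‖}

/-- `x ∈ ℤ[1/p]`: `x = u/p^n` for some `u ∈ ℤ`, `n ∈ ℕ`. -/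
def IsPInt (p : ℕ) (x : ℚ) : Prop := ∃ (u : ℤ) (n : ℕ), x = (u : ℚ) / (p : ℚ) ^ n

def pIntSubring (p : ℕ) [NeZero p] : Subring ℚ where
  carrier := {x | IsPInt p x}
  one_mem' := ⟨1, 0, by simp⟩
  zero_mem' := ⟨0, 0, by simp⟩
  add_mem' := by
    rintro _ _ ⟨u, n, rfl⟩ ⟨v, m, rfl⟩
    refine ⟨u * (p : ℤ) ^ m + v * (p : ℤ) ^ n, n + m, ?_⟩
    have : (p : ℚ) ≠ 0 := NeZero.ne _
    push_cast
    field_simp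
    ring
  mul_mem' := by
    rintro _ _ ⟨u, n, rfl⟩ ⟨v, m, rfl⟩
    exact ⟨u * v, n + m, by push_cast; ring⟩
  neg_mem' := by
    rintro _ ⟨u, n, rfl⟩
    exact ⟨-u, n, by push_cast; ring⟩

theorem mem_pIntSubring {p : ℕ} [NeZero p] {x : ℚ} : x ∈ pIntSubring p ↔ IsPInt p x :=
  Iff.rfl

namespace IsPInt

variable {p : ℕ}

theorem of_mul_of_gcd_eq_one [NeZero p] {a b c : ℤ} (hgcd : Int.gcd (Int.gcd a b) c = 1)
    {μ : ℚ} (ha : IsPInt p (μ * a)) (hb : IsPInt p (μ * b)) (hc : IsPInt p (μ * c)) :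
    IsPInt p μ := by
  obtain ⟨X, Y, hXY⟩ : ∃ X Y : ℤ, (Int.gcd a b : ℤ) = a * X + b * Y :=
    ⟨_, _, Int.gcd_eq_gcd_ab a b⟩
  obtain ⟨Z, W, hZW⟩ : ∃ Z W : ℤ, (1 : ℤ) = Int.gcd a b * Z + c * W :=
    ⟨_, _, by rw [← Int.gcd_eq_gcd_ab, hgcd, Nat.cast_one]⟩
  rw [hXY] at hZW
  rw [← mem_pIntSubring] at ha hb hc ⊢
  convert_to (μ * a) * (X * Z : ℤ) + (μ * b) * (Y * Z : ℤ) + (μ * c) * (W : ℤ) ∈ pIntSubring p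
    using 1
  · have := congrArg (Int.cast : ℤ → ℚ) hZW
    push_cast at this ⊢
    linear_combination μ * this
  · apply_rules [add_mem, mul_mem, intCast_mem]

theorem exists_abs_eq_zpow (hp : p.Prime) {x y : ℚ} (hx : IsPInt p x) (hy : IsPInt p y)
    (hxy : x * y = 1) : ∃ j : ℤ, |x| = (p : ℚ) ^ j := by
  obtain ⟨u, n, rfl⟩ := hx
  obtain ⟨v, m, rfl⟩ := hy
  have hp0 : (0 : ℚ) < p := by exact_mod_cast hp.pos
  have huv : u * v = (p : ℤ) ^ (n + m) := by
    field_simp at hxy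
    exact_mod_cast (by rw [pow_add]; linear_combination hxy : (u * v : ℚ) = (p : ℚ) ^ (n + m))
  obtain ⟨i, -, hi⟩ := (Nat.dvd_prime_pow hp).1
    (by simpa [Int.natAbs_pow] using Int.natAbs_dvd_natAbs.2 (Dvd.intro v huv))
  refine ⟨i - n, ?_⟩
  rw [abs_div, abs_of_pos (pow_pos hp0 n), zpow_sub₀ hp0.ne', ← Int.cast_abs, Int.abs_eq_natAbs, hi]
  simp

end IsPInt

section QuadraticIrrationality

variable {K : Type*} [Field K]

theorem eq_neg_mul_add_and_eq_mul_mul_of_roots {a b c w w' : K}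
    (hw : a * w ^ 2 + b * w + c = 0) (hw' : a * w' ^ 2 + b * w' + c = 0) (hne : w ≠ w') :
    b = -(a * (w + w')) ∧ c = a * (w * w') := by
  have hfactor : (w - w') * (a * (w + w') + b) = 0 := by linear_combination hw - hw'
  have hsum : a * (w + w') + b = 0 := (mul_eq_zero.1 hfactor).resolve_left (sub_ne_zero.2 hne)
  exact ⟨by linear_combination hsum, by linear_combination hw - w * hsum⟩

theorem mobius_symm {α β γ δ x y : K} (hdet : α * δ - β * γ = 1) (hden : γ * x + δ ≠ 0)
    (hy : y = (α * x + β) / (γ * x + δ)) :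
    -γ * y + α ≠ 0 ∧ x = (δ * y + -β) / (-γ * y + α) := by
  have hyx : y * (γ * x + δ) = α * x + β := by rw [hy]; exact div_mul_cancel₀ _ hden
  have hinv : (-γ * y + α) * (γ * x + δ) = 1 := by linear_combination -γ * hyx + hdet
  have hden' : -γ * y + α ≠ 0 := left_ne_zero_of_mul_eq_one hinv
  refine ⟨hden', ?_⟩
  rw [eq_div_iff hden']
  linear_combination -hyx

variable [CharZero K]

theorem eq_zero_of_mul_add_eq_zero {x : K} (hx : x ∉ Set.range ((↑) : ℚ → K)) {r s : ℚ}
    (h : (r : K) * x + s = 0) : r = 0 ∧ s = 0 := by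
  have hr : r = 0 := by
    by_contra hr
    refine hx ⟨-s / r, ?_⟩
    rw [Rat.cast_div, Rat.cast_neg, div_eq_iff (by exact_mod_cast hr)]
    linear_combination -h
  refine ⟨hr, ?_⟩
  simpa [hr] using h

theorem exists_eq_mul_of_eval_eq_zero {x : K} (hx : x ∉ Set.range ((↑) : ℚ → K))
    {a b c a' b' c' : ℚ} (ha : a ≠ 0) (h : (a : K) * x ^ 2 + b * x + c = 0)
    (h' : (a' : K) * x ^ 2 + b' * x + c' = 0) :
    ∃ μ : ℚ, a' = μ * a ∧ b' = μ * b ∧ c' = μ * c := by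
  obtain ⟨hb, hc⟩ := eq_zero_of_mul_add_eq_zero hx (r := a' * b - a * b') (s := a' * c - a * c')
    (by push_cast; linear_combination (a' : K) * h - (a : K) * h')
  refine ⟨a' / a, by field_simp, ?_, ?_⟩
  · field_simp
    linear_combination -hb
  · field_simp
    linear_combination -hc

end QuadraticIrrationality

theorem Int.exists_eq_mul_and_gcd_eq_one {A B C : ℤ} (hA : A ≠ 0) :
    ∃ g a b c : ℤ,
      g ≠ 0 ∧ A = g * a ∧ B = g * b ∧ C = g * c ∧ Int.gcd (Int.gcd a b) c = 1 := by
  set g : ℕ := Int.gcd (Int.gcd A B) C with hg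
  have hg0 : g ≠ 0 := by simp [hg, Int.gcd_eq_zero_iff, hA]
  obtain ⟨a, hA'⟩ : (g : ℤ) ∣ A := (Int.gcd_dvd_left _ _).trans (Int.gcd_dvd_left _ _)
  obtain ⟨b, hB'⟩ : (g : ℤ) ∣ B := (Int.gcd_dvd_left _ _).trans (Int.gcd_dvd_right _ _)
  obtain ⟨c, hC'⟩ : (g : ℤ) ∣ C := Int.gcd_dvd_right _ _
  refine ⟨g, a, b, c, by exact_mod_cast hg0, hA', hB', hC', ?_⟩
  have : g * Int.gcd (Int.gcd a b) c = g * 1 := by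
    conv_rhs => rw [mul_one, hg, hA', hB', hC', Int.gcd_mul_left, Int.natAbs_natCast, Nat.cast_mul,
      Int.gcd_mul_left, Int.natAbs_natCast]
  exact Nat.eq_of_mul_eq_mul_left (Nat.pos_of_ne_zero hg0) this

theorem exists_gcd_eq_one_eval_eq_zero {L : Type*} [Field L] [CharZero L]
    (hL : Module.finrank ℚ L = 2) {x : L} (hx : x ∉ Set.range ((↑) : ℚ → L)) :
    ∃ a b c : ℤ, a ≠ 0 ∧ Int.gcd (Int.gcd a b) c = 1 ∧ (a : L) * x ^ 2 + b * x + c = 0 := by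
  have : FiniteDimensional ℚ L := Module.finite_of_finrank_eq_succ hL
  have hdep : ¬ LinearIndependent ℤ ![x ^ 2, x, 1] := by
    rw [LinearIndependent.iff_fractionRing ℤ ℚ]
    intro hind
    simpa [hL] using hind.fintype_card_le_finrank
  obtain ⟨g, hrel, i, hi⟩ := Fintype.not_linearIndependent_iff.1 hdep
  simp only [Fin.sum_univ_three, Matrix.cons_val, zsmul_eq_mul, mul_one] at hrel
  have hg : g 0 ≠ 0 := by
    intro h0
    obtain ⟨h1, h2⟩ := eq_zero_of_mul_add_eq_zero hx (r := g 1) (s := g 2)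
      (by push_cast; linear_combination hrel - x ^ 2 * congrArg (Int.cast : ℤ → L) h0)
    fin_cases i <;> simp_all
  obtain ⟨d, a, b, c, hd, ha, hb, hc, hprim⟩ :=
    Int.exists_eq_mul_and_gcd_eq_one (B := g 1) (C := g 2) hg
  refine ⟨a, b, c, right_ne_zero_of_mul (ha ▸ hg), hprim, ?_⟩
  rw [ha, hb, hc] at hrel
  push_cast at hrel
  have hfactor : (d : L) * ((a : L) * x ^ 2 + b * x + c) = 0 := by linear_combination hrel
  exact (mul_eq_zero.1 hfactor).resolve_left (by exact_mod_cast hd)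

theorem mul_neg_of_mul_neg_of_eval_eq_zero {F : Type*} [Field F] (ι : F →+* ℝ) {w w' : F}
    (hsign : ι w * ι w' < 0) {a b c : ℤ} (ha : a ≠ 0) (hw : (a : F) * w ^ 2 + b * w + c = 0)
    (hw' : (a : F) * w' ^ 2 + b * w' + c = 0) : a * c < 0 := by
  have hne : w ≠ w' := by
    rintro rfl
    nlinarith [mul_self_nonneg (ι w)]
  have hc := congrArg ι (eq_neg_mul_add_and_eq_mul_mul_of_roots hw hw' hne).2
  simp only [map_intCast, map_mul] at hc
  have : (a : ℝ) * c = (a : ℝ) ^ 2 * (ι w * ι w') := by rw [hc]; ring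
  have hneg : (a : ℝ) * c < 0 :=
    this ▸ mul_neg_of_pos_of_neg (pow_two_pos_of_ne_zero (by exact_mod_cast ha)) hsign
  exact_mod_cast hneg

theorem eval_conj_eq_zero_and_ne_and_mul_neg {K : Type*} [Field K] {F : Subfield K}
    (ι : F →+* ℝ) (σ : F ≃+* F) {ω : F} (hsign : ι ω * ι (σ ω) < 0) {a b c : ℤ} (ha : a ≠ 0)
    (hω : (a : K) * (ω : K) ^ 2 + b * ω + c = 0) :
    (a : K) * (σ ω : K) ^ 2 + b * (σ ω : K) + c = 0 ∧ (ω : K) ≠ σ ω ∧ a * c < 0 := by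
  have hωF : (a : F) * ω ^ 2 + b * ω + c = 0 := by exact_mod_cast hω
  have hσF : (a : F) * σ ω ^ 2 + b * σ ω + c = 0 := by simpa using congrArg σ hωF
  refine ⟨by exact_mod_cast hσF, fun h => ?_,
    mul_neg_of_mul_neg_of_eval_eq_zero ι hsign ha hωF hσF⟩
  rw [← Subtype.coe_inj.1 h] at hsign
  nlinarith [mul_self_nonneg (ι ω)]

section DiscriminantRigidity

variable {p : ℕ} {K : Type*} [Field K] [CharZero K]

theorem exists_isPInt_discrim_eq_sq_mul [NeZero p] {x : K} (hx : x ∉ Set.range ((↑) : ℚ → K))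
    {a b c : ℤ} (ha : a ≠ 0) (hprim : Int.gcd (Int.gcd a b) c = 1)
    (hQ : (a : K) * x ^ 2 + b * x + c = 0) {a' b' c' : ℚ}
    (ha' : IsPInt p a') (hb' : IsPInt p b') (hc' : IsPInt p c')
    (hQ' : (a' : K) * x ^ 2 + b' * x + c' = 0) :
    ∃ μ : ℚ, IsPInt p μ ∧ discrim a' b' c' = μ ^ 2 * discrim (a : ℚ) b c := by
  obtain ⟨μ, rfl, rfl, rfl⟩ := exists_eq_mul_of_eval_eq_zero hx (a := a) (b := b) (c := c)
    (by exact_mod_cast ha) (by push_cast; exact hQ) hQ'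
  exact ⟨μ, IsPInt.of_mul_of_gcd_eq_one hprim ha' hb' hc', by unfold discrim; ring⟩

theorem exists_isPInt_discrim_eq_sq_mul_of_mobius [NeZero p] {x y : K}
    (hx : x ∉ Set.range ((↑) : ℚ → K)) {α β γ δ : ℚ} (hα : IsPInt p α) (hβ : IsPInt p β)
    (hγ : IsPInt p γ) (hδ : IsPInt p δ) (hdet : α * δ - β * γ = 1)
    (hden : (γ : K) * x + δ ≠ 0) (hy : y = (α * x + β) / (γ * x + δ))
    {a b c : ℤ} (ha : a ≠ 0) (hprim : Int.gcd (Int.gcd a b) c = 1)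
    (hQ : (a : K) * x ^ 2 + b * x + c = 0) {a' b' c' : ℤ}
    (hQ' : (a' : K) * y ^ 2 + b' * y + c' = 0) :
    ∃ μ : ℚ, IsPInt p μ ∧ discrim (a' : ℚ) b' c' = μ ^ 2 * discrim (a : ℚ) b c := by
  rw [← mem_pIntSubring] at hα hβ hγ hδ
  have hyx : y * ((γ : K) * x + δ) = α * x + β := by rw [hy]; exact div_mul_cancel₀ _ hden
  -- the coefficients of `Q'(αX + βY, γX + δY)`, which vanishes at `x`
  obtain ⟨μ, hμ, hdisc⟩ := exists_isPInt_discrim_eq_sq_mul hx ha hprim hQ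
    (a' := a' * α ^ 2 + b' * α * γ + c' * γ ^ 2)
    (b' := 2 * a' * α * β + b' * (α * δ + β * γ) + 2 * c' * γ * δ)
    (c' := a' * β ^ 2 + b' * β * δ + c' * δ ^ 2)
    (mem_pIntSubring.1 (by apply_rules [add_mem, mul_mem, pow_mem, intCast_mem, ofNat_mem]))
    (mem_pIntSubring.1 (by apply_rules [add_mem, mul_mem, pow_mem, intCast_mem, ofNat_mem]))
    (mem_pIntSubring.1 (by apply_rules [add_mem, mul_mem, pow_mem, intCast_mem, ofNat_mem]))
    (by
      push_cast
      linear_combination ((γ : K) * x + δ) ^ 2 * hQ'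
        - (a' * (y * ((γ : K) * x + δ) + (α * x + β)) + b' * ((γ : K) * x + δ)) * hyx)
  refine ⟨μ, hμ, ?_⟩
  rw [← hdisc]
  unfold discrim
  linear_combination (-(b' : ℚ) ^ 2 + 4 * a' * c') * (α * δ - β * γ + 1) * hdet

theorem exists_discrim_eq_mul_zpow (hp : p.Prime) {τ ω : K} (hτ : τ ∉ Set.range ((↑) : ℚ → K))
    {α β γ δ : ℚ} (hα : IsPInt p α) (hβ : IsPInt p β) (hγ : IsPInt p γ) (hδ : IsPInt p δ)
    (hdet : α * δ - β * γ = 1) (hω : ω = (α * τ + β) / (γ * τ + δ))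
    {a₀ b₀ c₀ : ℤ} (ha₀ : a₀ ≠ 0) (hprim₀ : Int.gcd (Int.gcd a₀ b₀) c₀ = 1)
    (hQ₀ : (a₀ : K) * τ ^ 2 + b₀ * τ + c₀ = 0)
    {a b c : ℤ} (ha : a ≠ 0) (hprim : Int.gcd (Int.gcd a b) c = 1)
    (hQ : (a : K) * ω ^ 2 + b * ω + c = 0) :
    ∃ j : ℤ, discrim (a : ℚ) b c = discrim (a₀ : ℚ) b₀ c₀ * (p : ℚ) ^ j := by
  have : NeZero p := ⟨hp.ne_zero⟩
  have hden : (γ : K) * τ + δ ≠ 0 := fun h0 => by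
    obtain ⟨rfl, rfl⟩ := eq_zero_of_mul_add_eq_zero hτ h0
    simp at hdet
  obtain ⟨hden', hτω⟩ := mobius_symm (by exact_mod_cast congrArg (Rat.cast : ℚ → K) hdet) hden hω
  have hωQ : ω ∉ Set.range ((↑) : ℚ → K) := by
    rintro ⟨q, rfl⟩
    exact hτ ⟨(δ * q - β) / (-γ * q + α), by rw [hτω]; push_cast; ring⟩
  obtain ⟨μ, hμ, hD⟩ := exists_isPInt_discrim_eq_sq_mul_of_mobius hτ hα hβ hγ hδ hdet hden hω
    ha₀ hprim₀ hQ₀ hQ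
  obtain ⟨ν, hν, hD₀⟩ := exists_isPInt_discrim_eq_sq_mul_of_mobius hωQ hδ
    ((pIntSubring p).neg_mem hβ) ((pIntSubring p).neg_mem hγ) hα (by linear_combination hdet)
    (by push_cast; exact hden') (by push_cast; exact hτω) ha hprim hQ hQ₀
  -- `D = μ² D₀` and `D₀ = ν² D`, so `μ²` is a unit of `ℤ[1/p]`
  rcases eq_or_ne (discrim (a : ℚ) b c) 0 with h0 | h0
  · exact ⟨0, by rw [h0, hD₀, h0]; ring⟩
  obtain ⟨j, hj⟩ := IsPInt.exists_abs_eq_zpow hp ((pIntSubring p).mul_mem hμ hμ)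
    ((pIntSubring p).mul_mem hν hν)
    (mul_left_cancel₀ h0 (by linear_combination -hD - μ ^ 2 * hD₀ : _ = discrim (a : ℚ) b c * 1))
  refine ⟨j, ?_⟩
  rw [hD, ← hj, abs_mul_self]
  ring

end DiscriminantRigidity

section Ultrametric

variable {K : Type*} [NormedField K] [IsUltrametricDist K]

theorem norm_sub_eq_of_norm_lt {x y : K} (h : ‖x‖ < ‖y‖) : ‖x - y‖ = ‖y‖ := by
  have := IsUltrametricDist.norm_sub_eq_max_of_norm_sub_ne_norm_sub x 0 y
  rw [sub_zero, zero_sub, norm_neg] at this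
  rw [this h.ne, max_eq_right h.le]

theorem max_norm_le_norm_mul_max_mul_max {a b c w w' : K} (hb : b = -(a * (w + w')))
    (hc : c = a * (w * w')) : max (max ‖a‖ ‖b‖) ‖c‖ ≤ ‖a‖ * max 1 ‖w‖ * max 1 ‖w'‖ := by
  have h1 : 1 ≤ max 1 ‖w‖ := le_max_left _ _
  have h1' : 1 ≤ max 1 ‖w'‖ := le_max_left _ _
  have hw : ‖w‖ ≤ max 1 ‖w‖ := le_max_right _ _
  have hw' : ‖w'‖ ≤ max 1 ‖w'‖ := le_max_right _ _
  have hsum : ‖w + w'‖ ≤ max 1 ‖w‖ * max 1 ‖w'‖ :=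
    (IsUltrametricDist.norm_add_le_max w w').trans (max_le (by nlinarith) (by nlinarith))
  have ha := norm_nonneg a
  refine max_le (max_le ?_ ?_) ?_
  · rw [mul_assoc]
    exact le_mul_of_one_le_right ha (one_le_mul_of_one_le_of_one_le h1 h1')
  · rw [hb, norm_neg, norm_mul, mul_assoc]
    exact mul_le_mul_of_nonneg_left hsum ha
  · rw [hc, norm_mul, norm_mul, mul_assoc]
    exact mul_le_mul_of_nonneg_left (mul_le_mul hw hw' (norm_nonneg _) (by linarith)) ha

end Ultrametric

theorem norm_eq_norm_mul_norm_sub_of_sq_eq_discrim {R : Type*} [NormedField R]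
    {a b c w w' s : R} (hb : b = -(a * (w + w'))) (hc : c = a * (w * w'))
    (hs : s ^ 2 = discrim a b c) : ‖s‖ = ‖a‖ * ‖w - w'‖ := by
  rw [← norm_mul]
  refine (sq_eq_sq₀ (norm_nonneg _) (norm_nonneg _)).1 ?_
  rw [← norm_pow, ← norm_pow, hs, hb, hc]
  congr 1
  unfold discrim
  ring

theorem tendstoUniformlyOn_tsum_of_forall_eventually_norm_lt {ι α E : Type*}
    [NormedAddCommGroup E] [IsUltrametricDist E] [CompleteSpace E] {f : ι → α → E} {s : Set α}
    (hf : ∀ ε > 0, ∀ᶠ i in cofinite, ∀ x ∈ s, ‖f i x‖ < ε) :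
    TendstoUniformlyOn (fun T : Finset ι => fun x => ∑ i ∈ T, f i x) (fun x => ∑' i, f i x)
      atTop s := by
  rw [Metric.tendstoUniformlyOn_iff]
  intro ε hε
  have hfin := eventually_cofinite.1 (hf (ε / 2) (half_pos hε))
  filter_upwards [eventually_ge_atTop hfin.toFinset] with T hT x hx
  have hsum : Summable fun i => f i x :=
    NonarchimedeanAddGroup.summable_of_tendsto_cofinite_zero <| Metric.tendsto_nhds.2 fun δ hδ =>
      (hf δ hδ).mono fun i hi => by simpa [dist_eq_norm] using hi x hx
  rw [dist_eq_norm, ← hsum.sum_add_tsum_compl (s := T), add_sub_cancel_left]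
  refine (IsUltrametricDist.norm_tsum_le_of_forall_le_of_nonneg (half_pos hε).le
    fun i => ?_).trans_lt (half_lt_self hε)
  have hi : (i : ι) ∉ hfin.toFinset := fun h => i.2 (hT h)
  simp only [Set.Finite.mem_toFinset, Set.mem_ofPred_eq, not_not] at hi
  exact (hi x hx).le

theorem abs_le_discrim_of_mul_neg {a b c : ℤ} (hac : a * c < 0) :
    |a| ≤ discrim a b c ∧ |b| ≤ discrim a b c ∧ |c| ≤ discrim a b c := by
  have ha : 1 ≤ |a| := Int.one_le_abs (left_ne_zero_of_mul hac.ne)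
  have hc : 1 ≤ |c| := Int.one_le_abs (right_ne_zero_of_mul hac.ne)
  have habs : |a| * |c| = -(a * c) := by rw [← abs_mul, abs_of_neg hac]
  unfold discrim
  refine ⟨by nlinarith [sq_nonneg b], ?_, by nlinarith [sq_nonneg b]⟩
  nlinarith [Int.le_self_sq b, le_abs_self b, neg_abs_le b, sq_abs b]

theorem finite_setOf_discrim_le {X : Type*} {S : Set X} {qa qb qc : X → ℤ}
    (hinj : S.InjOn fun x => (qa x, qb x, qc x)) (hac : ∀ x ∈ S, qa x * qc x < 0) (N : ℤ) :
    {x ∈ S | discrim (qa x) (qb x) (qc x) ≤ N}.Finite := by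
  refine Set.Finite.of_finite_image ?_ (hinj.mono fun x hx => hx.1)
  have hbox := (Set.finite_Icc (-N) N).prod ((Set.finite_Icc (-N) N).prod (Set.finite_Icc (-N) N))
  refine hbox.subset ?_
  rintro _ ⟨x, ⟨hx, hD⟩, rfl⟩
  obtain ⟨ha, hb, hc⟩ := abs_le_discrim_of_mul_neg (b := qb x) (hac x hx)
  exact ⟨abs_le.1 (ha.trans hD), abs_le.1 (hb.trans hD), abs_le.1 (hc.trans hD)⟩

theorem intCast_mul_padicNorm_eq {p : ℕ} [Fact p.Prime] {D j : ℤ} {D₀ : ℚ}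
    (h : (D : ℚ) = D₀ * (p : ℚ) ^ j) : (D : ℝ) * ‖(D : ℚ_[p])‖ = D₀ * ‖(D₀ : ℚ_[p])‖ := by
  have hR : (D : ℝ) = D₀ * (p : ℝ) ^ j := by
    simpa using congrArg (Rat.cast : ℚ → ℝ) h
  have hQp : (D : ℚ_[p]) = D₀ * (p : ℚ_[p]) ^ j := by
    simpa using congrArg (Rat.cast : ℚ → ℚ_[p]) h
  have hp : (0 : ℝ) < p := by exact_mod_cast (Fact.out : p.Prime).pos
  rw [hR, hQp, norm_mul, Padic.norm_p_zpow, zpow_neg]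
  field_simp

section Affinoid

variable {p : ℕ} [Fact p.Prime] {K : Type*} [NormedField K] [Algebra ℚ_[p] K]

theorem one_le_pow_prime (h : ℕ) : 1 ≤ (p : ℝ) ^ h :=
  one_le_pow₀ (by exact_mod_cast (Fact.out : p.Prime).one_lt.le)

theorem isUltrametricDist_of_norm_algebraMap (hK : ∀ x : ℚ_[p], ‖algebraMap ℚ_[p] K x‖ = ‖x‖) :
    IsUltrametricDist K :=
  IsUltrametricDist.isUltrametricDist_of_forall_norm_natCast_le_one fun n => by
    rw [← map_natCast (algebraMap ℚ_[p] K), hK]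
    exact_mod_cast Padic.norm_int_le_one (p := p) n

theorem norm_intCast_eq_padicNorm (hK : ∀ x : ℚ_[p], ‖algebraMap ℚ_[p] K x‖ = ‖x‖) (n : ℤ) :
    ‖(n : K)‖ = ‖(n : ℚ_[p])‖ := by
  rw [← map_intCast (algebraMap ℚ_[p] K), hK]

theorem one_le_max_norm_intCast (hK : ∀ x : ℚ_[p], ‖algebraMap ℚ_[p] K x‖ = ‖x‖) {a b c : ℤ}
    (hprim : Int.gcd (Int.gcd a b) c = 1) : 1 ≤ max (max ‖(a : K)‖ ‖(b : K)‖) ‖(c : K)‖ := by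
  by_contra! hlt
  simp only [max_lt_iff, norm_intCast_eq_padicNorm hK, Padic.norm_intCast_lt_one_iff] at hlt
  obtain ⟨⟨ha, hb⟩, hc⟩ := hlt
  have := Int.dvd_coe_gcd (Int.dvd_coe_gcd ha hb) hc
  rw [hprim, Nat.cast_one, Int.natCast_dvd_ofNat] at this
  exact (Fact.out : p.Prime).one_lt.ne' (Nat.dvd_one.1 this)

theorem one_le_norm_mul_max_mul_max (hK : ∀ x : ℚ_[p], ‖algebraMap ℚ_[p] K x‖ = ‖x‖)
    {a b c : ℤ} (hprim : Int.gcd (Int.gcd a b) c = 1) {w w' : K}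
    (hw : (a : K) * w ^ 2 + b * w + c = 0) (hw' : (a : K) * w' ^ 2 + b * w' + c = 0)
    (hne : w ≠ w') : 1 ≤ ‖(a : K)‖ * max 1 ‖w‖ * max 1 ‖w'‖ := by
  have := isUltrametricDist_of_norm_algebraMap hK
  obtain ⟨hb, hc⟩ := eq_neg_mul_add_and_eq_mul_mul_of_roots hw hw' hne
  exact (one_le_max_norm_intCast hK hprim).trans (max_norm_le_norm_mul_max_mul_max hb hc)

theorem inv_pow_two_mul_max_le_norm_sub [IsUltrametricDist K] {h : ℕ} {z ξ : K}
    (hz : z ∈ affinoid p K h) (hξ : ξ ∉ affinoid p K h) :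
    ((p : ℝ) ^ h)⁻¹ ^ 2 * max 1 ‖ξ‖ ≤ ‖z - ξ‖ := by
  obtain ⟨hz_le, hz_far⟩ := hz
  have hP := one_le_pow_prime (p := p) h
  have hr : 0 < ((p : ℝ) ^ h)⁻¹ := by positivity
  have hr1 : ((p : ℝ) ^ h)⁻¹ ≤ 1 := inv_le_one_of_one_le₀ hP
  rcases lt_or_ge ((p : ℝ) ^ h) ‖ξ‖ with hbig | hsmall
  · rw [norm_sub_eq_of_norm_lt (hz_le.trans_lt hbig), max_eq_right (by linarith)]
    exact mul_le_of_le_one_left (norm_nonneg _) (pow_le_one₀ hr.le hr1)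
  · simp only [affinoid, Set.mem_ofPred_eq, not_and, not_forall, not_le] at hξ
    obtain ⟨t, ht⟩ := hξ hsmall
    have hzt := hz_far t
    calc ((p : ℝ) ^ h)⁻¹ ^ 2 * max 1 ‖ξ‖ ≤ ((p : ℝ) ^ h)⁻¹ ^ 2 * (p : ℝ) ^ h := by
          gcongr
          exact max_le hP hsmall
      _ = ((p : ℝ) ^ h)⁻¹ := by field_simp
      _ ≤ ‖z - ξ‖ := by
          rw [IsUltrametricDist.norm_sub_eq_max_of_norm_sub_ne_norm_sub z (algebraMap ℚ_[p] K t) ξ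
            (by rw [norm_sub_rev _ ξ]; exact (ht.trans_le hzt).ne')]
          exact hzt.trans (le_max_left _ _)

theorem inv_pow_four_le_norm_eval (hK : ∀ x : ℚ_[p], ‖algebraMap ℚ_[p] K x‖ = ‖x‖) {h : ℕ}
    {a b c : ℤ} (hprim : Int.gcd (Int.gcd a b) c = 1) {w w' : K}
    (hw : (a : K) * w ^ 2 + b * w + c = 0) (hw' : (a : K) * w' ^ 2 + b * w' + c = 0)
    (hne : w ≠ w') (hwA : w ∉ affinoid p K h) (hw'A : w' ∉ affinoid p K h)
    {z : K} (hz : z ∈ affinoid p K h) :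
    ((p : ℝ) ^ h)⁻¹ ^ 4 ≤ ‖(a : K) * z ^ 2 + b * z + c‖ := by
  have := isUltrametricDist_of_norm_algebraMap hK
  obtain ⟨hb, hc⟩ := eq_neg_mul_add_and_eq_mul_mul_of_roots hw hw' hne
  have hfactor : (a : K) * z ^ 2 + b * z + c = a * (z - w) * (z - w') := by
    rw [hb, hc]; ring
  have hd := inv_pow_two_mul_max_le_norm_sub hz hwA
  have hd' := inv_pow_two_mul_max_le_norm_sub hz hw'A
  have hgauss := one_le_norm_mul_max_mul_max hK hprim hw hw' hne
  rw [hfactor, norm_mul, norm_mul]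
  calc ((p : ℝ) ^ h)⁻¹ ^ 4
      ≤ ((p : ℝ) ^ h)⁻¹ ^ 4 * (‖(a : K)‖ * max 1 ‖w‖ * max 1 ‖w'‖) :=
        le_mul_of_one_le_right (by positivity) hgauss
    _ = ‖(a : K)‖ * (((p : ℝ) ^ h)⁻¹ ^ 2 * max 1 ‖w‖) * (((p : ℝ) ^ h)⁻¹ ^ 2 * max 1 ‖w'‖) := by
        ring
    _ ≤ ‖(a : K)‖ * ‖z - w‖ * ‖z - w'‖ := by gcongr

theorem norm_two_mul_norm_mul_inv_le [CharZero K] {h : ℕ} {a b : ℤ} (ha : a ≠ 0) {w w' : K}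
    (hb : (b : K) = -(a * (w + w'))) (hwA : w ∈ affinoid p K h) :
    ‖(2 : K)‖ * ‖(a : K)‖ * ((p : ℝ) ^ h)⁻¹ ≤ ‖(a : K)‖ * ‖w - w'‖ := by
  -- `a (w - w') = 2a (w - t)` for the rational point `t = -b/2a`, which stays away from `w`
  have ht := hwA.2 ((-b / (2 * a) : ℚ) : ℚ_[p])
  rw [map_ratCast] at ht
  have haK : (a : K) ≠ 0 := by exact_mod_cast ha
  have hsub : (a : K) * (w - w') = 2 * a * (w - ((-b / (2 * a) : ℚ) : K)) := by
    push_cast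
    rw [hb]
    field_simp
    ring
  rw [← norm_mul (a : K), hsub, norm_mul, norm_mul]
  gcongr

theorem norm_two_mul_inv_pow_three_le [CharZero K]
    (hK : ∀ x : ℚ_[p], ‖algebraMap ℚ_[p] K x‖ = ‖x‖) {h : ℕ}
    {a b c : ℤ} (ha : a ≠ 0) (hprim : Int.gcd (Int.gcd a b) c = 1) {w w' s : K}
    (hw : (a : K) * w ^ 2 + b * w + c = 0) (hw' : (a : K) * w' ^ 2 + b * w' + c = 0)
    (hne : w ≠ w') (hs : s ^ 2 = ((discrim a b c : ℤ) : K)) (hwA : w ∈ affinoid p K h) :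
    ‖(2 : K)‖ * ((p : ℝ) ^ h)⁻¹ ^ 3 ≤ ‖s‖ := by
  have := isUltrametricDist_of_norm_algebraMap hK
  obtain ⟨hb, hc⟩ := eq_neg_mul_add_and_eq_mul_mul_of_roots hw hw' hne
  have hs_eq := norm_eq_norm_mul_norm_sub_of_sq_eq_discrim hb hc
    (by rw [hs]; push_cast [discrim]; ring)
  have hP := one_le_pow_prime (p := p) h
  have hr : 0 < ((p : ℝ) ^ h)⁻¹ := by positivity
  have h2 : ‖(2 : K)‖ ≤ 1 := by exact_mod_cast IsUltrametricDist.norm_natCast_le_one K 2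
  have hgauss := one_le_norm_mul_max_mul_max hK hprim hw hw' hne
  rcases le_or_gt ‖w'‖ ((p : ℝ) ^ h) with hw'_le | hw'_big
  · have ha_ge : ((p : ℝ) ^ h)⁻¹ ^ 2 ≤ ‖(a : K)‖ := by
      rw [inv_pow, inv_le_iff_one_le_mul₀ (by positivity)]
      calc 1 ≤ ‖(a : K)‖ * max 1 ‖w‖ * max 1 ‖w'‖ := hgauss
        _ ≤ ‖(a : K)‖ * (p : ℝ) ^ h * (p : ℝ) ^ h := by
            gcongr
            exacts [max_le hP hwA.1, max_le hP hw'_le]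
        _ = ‖(a : K)‖ * ((p : ℝ) ^ h) ^ 2 := by ring
    calc ‖(2 : K)‖ * ((p : ℝ) ^ h)⁻¹ ^ 3
        = ‖(2 : K)‖ * ((p : ℝ) ^ h)⁻¹ ^ 2 * ((p : ℝ) ^ h)⁻¹ := by ring
      _ ≤ ‖(2 : K)‖ * ‖(a : K)‖ * ((p : ℝ) ^ h)⁻¹ := by gcongr
      _ ≤ ‖s‖ := hs_eq ▸ norm_two_mul_norm_mul_inv_le ha hb hwA
  · have hww' : ‖w - w'‖ = max 1 ‖w'‖ := by
      rw [norm_sub_eq_of_norm_lt (hwA.1.trans_lt hw'_big), max_eq_right (by linarith)]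
    calc ‖(2 : K)‖ * ((p : ℝ) ^ h)⁻¹ ^ 3 ≤ 1 * ((p : ℝ) ^ h)⁻¹ ^ 1 :=
          mul_le_mul h2 (pow_le_pow_of_le_one hr.le (inv_le_one_of_one_le₀ hP) (by norm_num))
            (by positivity) zero_le_one
      _ ≤ ‖s‖ := by
          rw [one_mul, pow_one, inv_le_iff_one_le_mul₀ (by positivity), hs_eq, hww']
          calc 1 ≤ ‖(a : K)‖ * max 1 ‖w‖ * max 1 ‖w'‖ := hgauss
            _ ≤ ‖(a : K)‖ * (p : ℝ) ^ h * max 1 ‖w'‖ := by gcongr; exact max_le hP hwA.1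
            _ = ‖(a : K)‖ * max 1 ‖w'‖ * (p : ℝ) ^ h := by ring

theorem forall_mem_affinoid_eval_ne_zero_and_norm_lt [CharZero K]
    (hK : ∀ x : ℚ_[p], ‖algebraMap ℚ_[p] K x‖ = ‖x‖) {h k : ℕ} (hk : 1 ≤ k)
    {a b c : ℤ} (ha : a ≠ 0) (hprim : Int.gcd (Int.gcd a b) c = 1) {w w' s : K}
    (hw : (a : K) * w ^ 2 + b * w + c = 0) (hw' : (a : K) * w' ^ 2 + b * w' + c = 0)
    (hne : w ≠ w') (hs : s ^ 2 = ((discrim a b c : ℤ) : K)) {ε : ℝ} (hε : 0 < ε)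
    (hsmall : ‖s‖ < ‖(2 : K)‖ * min ε 1 * ((p : ℝ) ^ h)⁻¹ ^ 4) :
    ∀ z ∈ affinoid p K h, (a : K) * z ^ 2 + b * z + c ≠ 0 ∧
      ‖s ^ k * ((a : K) * z ^ 2 + b * z + c) ^ (-(k : ℤ))‖ < ε := by
  have := isUltrametricDist_of_norm_algebraMap hK
  have hP := one_le_pow_prime (p := p) h
  have hr : 0 < ((p : ℝ) ^ h)⁻¹ := by positivity
  have hr1 : ((p : ℝ) ^ h)⁻¹ ≤ 1 := inv_le_one_of_one_le₀ hP
  have h2 : ‖(2 : K)‖ ≤ 1 := by exact_mod_cast IsUltrametricDist.norm_natCast_le_one K 2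
  have hsmall' : ‖s‖ < ‖(2 : K)‖ * ((p : ℝ) ^ h)⁻¹ ^ 3 := hsmall.trans_le <| by
    rw [mul_assoc]
    gcongr
    calc min ε 1 * ((p : ℝ) ^ h)⁻¹ ^ 4 ≤ 1 * ((p : ℝ) ^ h)⁻¹ ^ 3 :=
          mul_le_mul (min_le_right _ _) (pow_le_pow_of_le_one hr.le hr1 (by norm_num))
            (by positivity) zero_le_one
      _ = ((p : ℝ) ^ h)⁻¹ ^ 3 := one_mul _
  have hnotMem : ∀ {x y : K}, (a : K) * x ^ 2 + b * x + c = 0 → (a : K) * y ^ 2 + b * y + c = 0 →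
      x ≠ y → x ∉ affinoid p K h := fun hx hy hxy hxA =>
    (norm_two_mul_inv_pow_three_le hK ha hprim hx hy hxy hs hxA).not_gt hsmall'
  intro z hz
  have hQ := inv_pow_four_le_norm_eval hK hprim hw hw' hne (hnotMem hw hw' hne)
    (hnotMem hw' hw hne.symm) hz
  have hQ0 : 0 < ‖(a : K) * z ^ 2 + b * z + c‖ := (by positivity : (0 : ℝ) < _).trans_le hQ
  refine ⟨norm_pos_iff.1 hQ0, ?_⟩
  have hratio : ‖s‖ / ‖(a : K) * z ^ 2 + b * z + c‖ < min ε 1 := by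
    rw [div_lt_iff₀ hQ0]
    calc ‖s‖ < ‖(2 : K)‖ * min ε 1 * ((p : ℝ) ^ h)⁻¹ ^ 4 := hsmall
      _ ≤ 1 * min ε 1 * ‖(a : K) * z ^ 2 + b * z + c‖ := by
          gcongr
      _ = min ε 1 * ‖(a : K) * z ^ 2 + b * z + c‖ := by ring
  rw [norm_mul, norm_zpow, norm_pow, zpow_neg, zpow_natCast, ← div_eq_mul_inv, ← div_pow]
  calc (‖s‖ / ‖(a : K) * z ^ 2 + b * z + c‖) ^ k ≤ ‖s‖ / ‖(a : K) * z ^ 2 + b * z + c‖ :=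
        pow_le_of_le_one (by positivity) (hratio.le.trans (min_le_right _ _)) (by omega)
    _ < ε := hratio.trans_le (min_le_left _ _)

theorem finite_setOf_le_norm
    (hK : ∀ x : ℚ_[p], ‖algebraMap ℚ_[p] K x‖ = ‖x‖) {X : Type*} {S : Set X}
    {qa qb qc : X → ℤ} {s : X → K} (hinj : S.InjOn fun x => (qa x, qb x, qc x))
    (hac : ∀ x ∈ S, qa x * qc x < 0)
    (hs : ∀ x ∈ S, s x ^ 2 = ((discrim (qa x) (qb x) (qc x) : ℤ) : K)) {D₀ : ℚ}
    (hD : ∀ x ∈ S, ∃ j : ℤ, discrim (qa x : ℚ) (qb x) (qc x) = D₀ * (p : ℚ) ^ j)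
    {δ : ℝ} (hδ : 0 < δ) : {x ∈ S | δ ≤ ‖s x‖}.Finite := by
  refine (finite_setOf_discrim_le hinj hac ⌈(D₀ : ℝ) * ‖(D₀ : ℚ_[p])‖ / δ ^ 2⌉).subset ?_
  rintro x ⟨hx, hδx⟩
  obtain ⟨j, hj⟩ := hD x hx
  have hDpos : (0 : ℝ) < discrim (qa x) (qb x) (qc x) := by
    have := (abs_le_discrim_of_mul_neg (b := qb x) (hac x hx)).1
    have := Int.one_le_abs (left_ne_zero_of_mul (hac x hx).ne)
    exact_mod_cast (by omega : 0 < discrim (qa x) (qb x) (qc x))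
  have hnorm : δ ^ 2 ≤ ‖((discrim (qa x) (qb x) (qc x) : ℤ) : ℚ_[p])‖ := by
    rw [← norm_intCast_eq_padicNorm hK, ← hs x hx, norm_pow]
    gcongr
  have hprod := intCast_mul_padicNorm_eq (D := discrim (qa x) (qb x) (qc x)) (D₀ := D₀)
    (by rw [← hj]; push_cast [discrim]; ring)
  refine ⟨hx, Int.cast_le.1 (le_trans ?_ (Int.le_ceil _))⟩
  rw [le_div_iff₀ (by positivity), ← hprod]
  gcongr

theorem finite_setOf_not_forall_mem_affinoid [CharZero K]
    (hK : ∀ x : ℚ_[p], ‖algebraMap ℚ_[p] K x‖ = ‖x‖)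
    {k : ℕ} (hk : 1 ≤ k) {X : Type*} {S : Set X} {qa qb qc : X → ℤ} {w w' s : X → K}
    (ha : ∀ x ∈ S, qa x ≠ 0) (hprim : ∀ x ∈ S, Int.gcd (Int.gcd (qa x) (qb x)) (qc x) = 1)
    (hw : ∀ x ∈ S, (qa x : K) * w x ^ 2 + qb x * w x + qc x = 0)
    (hw' : ∀ x ∈ S, (qa x : K) * w' x ^ 2 + qb x * w' x + qc x = 0 ∧ w x ≠ w' x ∧
      qa x * qc x < 0)
    (hs : ∀ x ∈ S, s x ^ 2 = ((discrim (qa x) (qb x) (qc x) : ℤ) : K))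
    (hinj : S.InjOn fun x => (qa x, qb x, qc x)) {D₀ : ℚ}
    (hD : ∀ x ∈ S, ∃ j : ℤ, discrim (qa x : ℚ) (qb x) (qc x) = D₀ * (p : ℚ) ^ j)
    (h : ℕ) (ε : ℝ) (hε : 0 < ε) :
    {x ∈ S | ¬ ∀ z ∈ affinoid p K h, (qa x : K) * z ^ 2 + qb x * z + qc x ≠ 0 ∧
      ‖s x ^ k * ((qa x : K) * z ^ 2 + qb x * z + qc x) ^ (-(k : ℤ))‖ < ε}.Finite := by
  have hr : 0 < ((p : ℝ) ^ h)⁻¹ := inv_pos.2 (zero_lt_one.trans_le (one_le_pow_prime h))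
  have hδ : 0 < ‖(2 : K)‖ * min ε 1 * ((p : ℝ) ^ h)⁻¹ ^ 4 :=
    mul_pos (mul_pos (norm_pos_iff.2 two_ne_zero) (lt_min hε one_pos)) (pow_pos hr 4)
  refine (finite_setOf_le_norm hK hinj (fun x hx => (hw' x hx).2.2) hs hD hδ).subset ?_
  rintro x ⟨hx, hbad⟩
  exact ⟨hx, not_lt.1 fun hsmall => hbad <| forall_mem_affinoid_eval_ne_zero_and_norm_lt hK hk
    (ha x hx) (hprim x hx) (hw x hx) (hw' x hx).1 (hw' x hx).2.1 (hs x hx) hε hsmall⟩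

end Affinoid

theorem stmt3_general (p : ℕ) [Fact p.Prime]
    (K : Type*) [NormedField K] [Algebra ℚ_[p] K] [CompleteSpace K]
    [CharZero K]
    (hK : ∀ x : ℚ_[p], ‖algebraMap ℚ_[p] K x‖ = ‖x‖)
    (k : ℕ) (hk : 1 ≤ k)
    (F : Subfield K) (hF2 : Module.finrank ℚ F = 2)
    (ι : F →+* ℝ) (σ : F ≃+* F)
    (τ : F) (hτQ : (τ : K) ∉ Set.range ((↑) : ℚ → K))
    (SigmaSet : Set F)
    (hSigma : SigmaSet = {ω : F |
      (∃ a b c d : ℚ, IsPInt p a ∧ IsPInt p b ∧ IsPInt p c ∧ IsPInt p d ∧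
        a * d - b * c = 1 ∧
        (ω : K) = ((a : K) * (τ : K) + (b : K)) / ((c : K) * (τ : K) + (d : K))) ∧
      ι ω * ι (σ ω) < 0})
    (qa qb qc : F → ℤ) (sq : F → K)
    (hform : ∀ ω ∈ SigmaSet,
      qa ω ≠ 0 ∧
      Int.gcd (Int.gcd (qa ω) (qb ω)) (qc ω) = 1 ∧
      (qa ω : K) * (ω : K) ^ 2 + (qb ω : K) * (ω : K) + (qc ω : K) = 0 ∧
      0 < (qb ω) ^ 2 - 4 * (qa ω) * (qc ω) ∧
      ι ω = (-(qb ω : ℝ) +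
          Real.sqrt (((qb ω) ^ 2 - 4 * (qa ω) * (qc ω) : ℤ) : ℝ)) / (2 * (qa ω : ℝ)) ∧
      (sq ω) ^ 2 = (((qb ω) ^ 2 - 4 * (qa ω) * (qc ω) : ℤ) : K)) :
    (∀ (h : ℕ), ∀ ε > (0 : ℝ),
      {ω ∈ SigmaSet | ¬ (∀ z ∈ affinoid p K h,
        ((qa ω : K) * z ^ 2 + (qb ω : K) * z + (qc ω : K) ≠ 0) ∧
        ‖(sq ω) ^ k *
            ((qa ω : K) * z ^ 2 + (qb ω : K) * z + (qc ω : K)) ^ (-(k : ℤ))‖ < ε)}.Finite) ∧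
    (∀ h : ℕ, ∃ g : K → K,
      TendstoUniformlyOn
        (fun (T : Finset {ω : F // ω ∈ SigmaSet ∧ ∀ z ∈ affinoid p K h,
            (qa ω : K) * z ^ 2 + (qb ω : K) * z + (qc ω : K) ≠ 0}) (z : K) =>
          ∑ ω ∈ T, (if 0 ≤ ι ω.1 then (1 : K) else -1) * (sq ω.1) ^ k *
            ((qa ω.1 : K) * z ^ 2 + (qb ω.1 : K) * z + (qc ω.1 : K)) ^ (-(k : ℤ)))
        g atTop (affinoid p K h)) := by
  have := isUltrametricDist_of_norm_algebraMap hK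
  obtain ⟨a₀, b₀, c₀, ha₀, hprim₀, hτ₀⟩ := exists_gcd_eq_one_eval_eq_zero hF2 (x := τ)
    fun ⟨q, hq⟩ => hτQ ⟨q, by rw [← hq]; rfl⟩
  have hconj (ω) (hω : ω ∈ SigmaSet) := eval_conj_eq_zero_and_ne_and_mul_neg ι σ
    (hSigma ▸ hω).2 (hform ω hω).1 (hform ω hω).2.2.1
  have hdisc (ω) (hω : ω ∈ SigmaSet) : ∃ j : ℤ,
      discrim (qa ω : ℚ) (qb ω) (qc ω) = discrim (a₀ : ℚ) b₀ c₀ * (p : ℚ) ^ j := by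
    obtain ⟨⟨α, β, γ, δ, hα, hβ, hγ, hδ, hdet, hmob⟩, -⟩ := hSigma ▸ hω
    obtain ⟨ha, hprim, hQ, -⟩ := hform ω hω
    exact exists_discrim_eq_mul_zpow Fact.out hτQ hα hβ hγ hδ hdet hmob ha₀ hprim₀
      (by exact_mod_cast congrArg ((↑) : F → K) hτ₀) ha hprim hQ
  have hinj : SigmaSet.InjOn fun ω => (qa ω, qb ω, qc ω) := fun ω hω ω' hω' heq => by
    simp only [Prod.mk.injEq] at heq
    apply ι.injective
    rw [(hform ω hω).2.2.2.2.1, (hform ω' hω').2.2.2.2.1, heq.1, heq.2.1, heq.2.2]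
  have hfinite (h : ℕ) (ε : ℝ) (hε : 0 < ε) := finite_setOf_not_forall_mem_affinoid hK hk
    (fun ω hω => (hform ω hω).1) (fun ω hω => (hform ω hω).2.1) (fun ω hω => (hform ω hω).2.2.1)
    hconj (fun ω hω => (hform ω hω).2.2.2.2.2) hinj hdisc h ε hε
  refine ⟨hfinite, fun h => ⟨_, tendstoUniformlyOn_tsum_of_forall_eventually_norm_lt
    fun ε hε => ?_⟩⟩
  filter_upwards
    [((hfinite h ε hε).preimage Subtype.val_injective.injOn).eventually_cofinite_notMem]
    with ω hω z hz
  simp only [Set.mem_preimage, Set.mem_ofPred_eq, not_and, not_not] at hω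
  split_ifs <;> simpa [mul_assoc] using ((hω ω.2.1) z hz).2

/-- Let `F ⊂ ℂ_p` be a real quadratic subfield with real embedding `ι`
and nontrivial automorphism `σ`, and `τ ∈ F ∖ ℚ`, `τ ∉ ℚ_p`.  Let `Σ` be the set of
`SL₂(ℤ[1/p])`-translates `ω` of `τ` with `ι(ω)·ι(ω′) < 0`; to `ω ∈ Σ` attach the
unique primitive integral quadratic form `Q_ω = [a_ω,b_ω,c_ω]` vanishing at `ω` whose
first real root is `ι(ω)`, of discriminant `D_ω > 0`, and a square root `c_ω ∈ ℂ_p` of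
`D_ω`.  Then for every `h ≥ 0` and `ε > 0, all but finitely many `ω ∈ Σ` satisfy:
`Q_ω(z,1) ≠ 0` on `H_p^{≤h}` and `sup_{z} |c_ω^k·Q_ω(z,1)^{−k}| < ε`; and the series
`Sum_ω sgn(ω)·c_ω^k·Q_ω(z,1)^{−k}` converges uniformly on `H_p^{≤h}` after removing the
finitely many terms whose form vanishes somewhere on `H_p^{≤h}`.
Here `ℂ_p` is modelled by a complete algebraically closed normed field `K` equipped
with an isometric `ℚ_[p]`-algebra structure. -/
theorem stmt3 (p : ℕ) [Fact p.Prime]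
    (K : Type*) [NormedField K] [Algebra ℚ_[p] K] [IsAlgClosed K] [CompleteSpace K]
    [CharZero K]
    (hK : ∀ x : ℚ_[p], ‖algebraMap ℚ_[p] K x‖ = ‖x‖)
    (k : ℕ) (hk : 1 ≤ k)
    (F : Subfield K) (hF2 : Module.finrank ℚ F = 2)
    (ι : F →+* ℝ) (σ : F ≃+* F) (hσ : σ ≠ RingEquiv.refl F)
    (τ : F) (hτQ : (τ : K) ∉ Set.range ((↑) : ℚ → K))
    (hτp : (τ : K) ∉ Set.range (algebraMap ℚ_[p] K))
    (SigmaSet : Set F)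
    (hSigma : SigmaSet = {ω : F |
      (∃ a b c d : ℚ, IsPInt p a ∧ IsPInt p b ∧ IsPInt p c ∧ IsPInt p d ∧
        a * d - b * c = 1 ∧
        (ω : K) = ((a : K) * (τ : K) + (b : K)) / ((c : K) * (τ : K) + (d : K))) ∧
      ι ω * ι (σ ω) < 0})
    (qa qb qc : F → ℤ) (sq : F → K)
    (hform : ∀ ω ∈ SigmaSet,
      qa ω ≠ 0 ∧
      Int.gcd (Int.gcd (qa ω) (qb ω)) (qc ω) = 1 ∧
      (qa ω : K) * (ω : K) ^ 2 + (qb ω : K) * (ω : K) + (qc ω : K) = 0 ∧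
      0 < (qb ω) ^ 2 - 4 * (qa ω) * (qc ω) ∧
      ι ω = (-(qb ω : ℝ) +
          Real.sqrt (((qb ω) ^ 2 - 4 * (qa ω) * (qc ω) : ℤ) : ℝ)) / (2 * (qa ω : ℝ)) ∧
      (sq ω) ^ 2 = (((qb ω) ^ 2 - 4 * (qa ω) * (qc ω) : ℤ) : K)) :
    (∀ (h : ℕ), ∀ ε > (0 : ℝ),
      {ω ∈ SigmaSet | ¬ (∀ z ∈ affinoid p K h,
        ((qa ω : K) * z ^ 2 + (qb ω : K) * z + (qc ω : K) ≠ 0) ∧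
        ‖(sq ω) ^ k *
            ((qa ω : K) * z ^ 2 + (qb ω : K) * z + (qc ω : K)) ^ (-(k : ℤ))‖ < ε)}.Finite) ∧
    (∀ h : ℕ, ∃ g : K → K,
      TendstoUniformlyOn
        (fun (T : Finset {ω : F // ω ∈ SigmaSet ∧ ∀ z ∈ affinoid p K h,
            (qa ω : K) * z ^ 2 + (qb ω : K) * z + (qc ω : K) ≠ 0}) (z : K) =>
          ∑ ω ∈ T, (if 0 ≤ ι ω.1 then (1 : K) else -1) * (sq ω.1) ^ k *
            ((qa ω.1 : K) * z ^ 2 + (qb ω.1 : K) * z + (qc ω.1 : K)) ^ (-(k : ℤ)))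
        g atTop (affinoid p K h)) :=
  stmt3_general p K hK k hk F hF2 ι σ τ hτQ SigmaSet hSigma qa qb qc sq hform
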